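/- Define ρ : [0,1] → ℝ by ρ(t) = 1/(2√(1−t²)) for 0 ≤ t ≤ 1/√2 and ρ(t) = t for 1/√2 ≤ t ≤ 1. Then ∫₀¹ ρ(t)³ dt = 5/16, ρ(1) + ρ'(1) = 2, and 2·ρ(1)⁴ > 3·(∫₀¹ ρ(t)³ dt)·(ρ(1) + ρ'(1)); i.e., ρ satisfies the four-dimensional criterion 2ρ(1)⁴ > 3(∫₀¹ρ³)(ρ(1)+ρ'(1)). -/

import Mathlib

open Set

/-- The radial profile of the four-dimensional cylinder of radius `1/2` with two
spherical caps of radius `1/2` attached: `ρ(t) = 1/(2√(1−t²))` for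
`0 ≤ t ≤ 1/√2` and `ρ(t) = t` for `1/√2 ≤ t ≤ 1`. -/
noncomputable def ρCap (t : ℝ) : ℝ :=
  if t ≤ (Real.sqrt 2)⁻¹ then (2 * Real.sqrt (1 - t ^ 2))⁻¹ else t

lemma sqrt2_facts : (1:ℝ) < Real.sqrt 2 ∧ (0:ℝ) < (Real.sqrt 2)⁻¹ ∧
    (Real.sqrt 2)⁻¹ < 1 ∧ ((Real.sqrt 2)⁻¹) ^ 2 = 1/2 := by
  have h2 : Real.sqrt 2 ^ 2 = 2 := Real.sq_sqrt (by norm_num)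
  have h0 : (0:ℝ) ≤ Real.sqrt 2 := Real.sqrt_nonneg 2
  have h1 : (1:ℝ) < Real.sqrt 2 := by nlinarith
  refine ⟨h1, by positivity, ?_, ?_⟩
  · rw [inv_lt_one_iff₀]; right; exact h1
  · rw [inv_pow, h2]; norm_num

lemma rhoCap_one : ρCap 1 = 1 := by
  have := sqrt2_facts
  rw [ρCap, if_neg (by linarith [this.2.2.1])]

lemma sqrt_sub_sq_pos {t : ℝ} (ht : t ≤ (Real.sqrt 2)⁻¹) (ht0 : -1 < t) :
    0 < Real.sqrt (1 - t ^ 2) := by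
  have h := sqrt2_facts
  apply Real.sqrt_pos.2
  nlinarith [h.2.2.1]

lemma sqrt_at_a : Real.sqrt (1 - ((Real.sqrt 2)⁻¹) ^ 2) = (Real.sqrt 2)⁻¹ := by
  rw [sqrt2_facts.2.2.2, show (1 - 1/2 : ℝ) = 2⁻¹ by norm_num, ← Real.sqrt_inv]

lemma rhoCap_eqOn_first : EqOn (fun t => ρCap t ^ 3)
    (fun t => ((2 * Real.sqrt (1 - t ^ 2))⁻¹) ^ 3) (uIcc 0 ((Real.sqrt 2)⁻¹)) := by
  intro t ht
  rw [uIcc_of_le sqrt2_facts.2.1.le] at ht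
  simp only [ρCap, if_pos ht.2]

lemma rhoCap_eqOn_second : EqOn (fun t => ρCap t ^ 3)
    (fun t => t ^ 3) (uIcc ((Real.sqrt 2)⁻¹) 1) := by
  obtain ⟨h1, ha0, ha1, ha2⟩ := sqrt2_facts
  intro t ht
  rw [uIcc_of_le ha1.le] at ht
  simp only [ρCap]
  rcases lt_or_ge ((Real.sqrt 2)⁻¹) t with h | h
  · rw [if_neg (not_le.2 h)]
  · have : t = (Real.sqrt 2)⁻¹ := le_antisymm h ht.1
    subst this
    rw [if_pos le_rfl, sqrt_at_a]
    have h2a : (2 * (Real.sqrt 2)⁻¹) * (Real.sqrt 2)⁻¹ = 1 := by nlinarith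
    rw [inv_eq_of_mul_eq_one_right h2a]

lemma contOn_first : ContinuousOn (fun t : ℝ => ((2 * Real.sqrt (1 - t ^ 2))⁻¹) ^ 3)
    (uIcc 0 ((Real.sqrt 2)⁻¹)) := by
  apply ContinuousOn.pow
  apply ContinuousOn.inv₀
  · exact continuousOn_const.mul ((continuous_const.sub (continuous_pow 2)).continuousOn.sqrt)
  · intro t ht
    rw [uIcc_of_le sqrt2_facts.2.1.le] at ht
    have hs : 0 < Real.sqrt (1 - t ^ 2) := sqrt_sub_sq_pos ht.2 (by linarith [ht.1])
    positivity

lemma integral_first :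
    (∫ t in (0:ℝ)..(Real.sqrt 2)⁻¹, ρCap t ^ 3) = 1/8 := by
  obtain ⟨h1, ha0, ha1, ha2⟩ := sqrt2_facts
  rw [intervalIntegral.integral_congr rhoCap_eqOn_first]
  have hderiv : ∀ t ∈ uIcc 0 ((Real.sqrt 2)⁻¹),
      HasDerivAt (fun t => t / (8 * Real.sqrt (1 - t ^ 2)))
      (((2 * Real.sqrt (1 - t ^ 2))⁻¹) ^ 3) t := by
    intro t ht
    rw [uIcc_of_le ha0.le] at ht
    have hs : 0 < Real.sqrt (1 - t ^ 2) := sqrt_sub_sq_pos ht.2 (by linarith [ht.1])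
    have htsq : t ^ 2 ≤ 1/2 := by
      calc t ^ 2 ≤ ((Real.sqrt 2)⁻¹) ^ 2 := pow_le_pow_left₀ ht.1 ht.2 2
        _ = 1/2 := ha2
    have hsq : Real.sqrt (1 - t ^ 2) ^ 2 = 1 - t ^ 2 := Real.sq_sqrt (by linarith)
    have hu : HasDerivAt (fun t : ℝ => 1 - t ^ 2) (-(2 * t)) t := by
      simpa using ((hasDerivAt_pow 2 t).const_sub 1)
    have h1t : (0:ℝ) < 1 - t ^ 2 := by linarith
    have hsqrt : HasDerivAt (fun t : ℝ => Real.sqrt (1 - t ^ 2))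
        (-(2 * t) / (2 * Real.sqrt (1 - t ^ 2))) t := hu.sqrt (by positivity)
    have hden : HasDerivAt (fun t : ℝ => 8 * Real.sqrt (1 - t ^ 2))
        (8 * (-(2 * t) / (2 * Real.sqrt (1 - t ^ 2)))) t := hsqrt.const_mul 8
    have : HasDerivAt (fun t : ℝ => t / (8 * Real.sqrt (1 - t ^ 2))) _ t :=
      (hasDerivAt_id t).div hden (by positivity)
    convert this using 1
    simp only [id]
    field_simp
    linear_combination (-8) * hsq
  rw [intervalIntegral.integral_eq_sub_of_hasDerivAt hderiv contOn_first.intervalIntegrable]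
  rw [sqrt_at_a]
  have : Real.sqrt (1 - (0:ℝ) ^ 2) = 1 := by norm_num
  rw [this]
  field_simp
  norm_num

lemma integral_second :
    (∫ t in ((Real.sqrt 2)⁻¹:ℝ)..1, ρCap t ^ 3) = 3/16 := by
  rw [intervalIntegral.integral_congr rhoCap_eqOn_second, integral_pow]
  have := sqrt2_facts.2.2.2
  have h4 : ((Real.sqrt 2)⁻¹) ^ 4 = 1/4 := by
    rw [show (4:ℕ) = 2 * 2 from rfl, pow_mul, this]; norm_num
  rw [h4]; norm_num

lemma integral_total :
    (∫ t in (0:ℝ)..1, ρCap t ^ 3) = 5/16 := by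
  have i1 : IntervalIntegrable (fun t => ρCap t ^ 3) MeasureTheory.volume 0 ((Real.sqrt 2)⁻¹) :=
    (contOn_first.intervalIntegrable).congr
      (fun t ht => (rhoCap_eqOn_first (uIoc_subset_uIcc ht)).symm)
  have i2 : IntervalIntegrable (fun t => ρCap t ^ 3) MeasureTheory.volume ((Real.sqrt 2)⁻¹) 1 :=
    ((continuous_pow 3).continuousOn.intervalIntegrable).congr
      (fun t ht => (rhoCap_eqOn_second (uIoc_subset_uIcc ht)).symm)
  rw [← intervalIntegral.integral_add_adjacent_intervals i1 i2, integral_first, integral_second]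
  norm_num

/-- **Example 3 (cylinder with spherical caps in `ℝ⁴`).**
`∫₀¹ ρ³ = 5/16`, `ρ(1) + ρ'(1) = 2` (one-sided derivative at `t = 1`), and the
four-dimensional criterion `2ρ(1)⁴ > 3(∫₀¹ ρ³)(ρ(1)+ρ'(1))` holds. -/
theorem cap_cylinder_satisfies_dim4_criterion :
    (∫ t in (0 : ℝ)..1, ρCap t ^ 3) = 5 / 16 ∧
    ∃ ρ'1 : ℝ, HasDerivWithinAt ρCap ρ'1 (Iic 1) 1 ∧
      ρCap 1 + ρ'1 = 2 ∧
      2 * ρCap 1 ^ 4 > 3 * (∫ t in (0 : ℝ)..1, ρCap t ^ 3) * (ρCap 1 + ρ'1) := by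
  obtain ⟨h1, ha0, ha1, ha2⟩ := sqrt2_facts
  refine ⟨integral_total, 1, ?_, ?_, ?_⟩
  · have heq : ρCap =ᶠ[nhds (1:ℝ)] id := by
      filter_upwards [Ioi_mem_nhds ha1] with t ht
      simp [ρCap, if_neg (not_le.2 (mem_Ioi.1 ht))]
    exact (((hasDerivAt_id (1:ℝ)).congr_of_eventuallyEq heq)).hasDerivWithinAt
  · rw [rhoCap_one]; norm_num
  · rw [rhoCap_one, integral_total]; norm_num
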